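/- Let ε ∈ (0,1/4), let R ⊆ {0,1}^d be ε-good with d ≥ 10, and let B ⊆ R. Define L = {x ∉ B : deg_{Q^d}(x,B) > (1−2ε)d}. If |L| ≥ 2^d/20, then the number of edges of the graph of conv(R) between B and R\B is at least d·2^d/80, and in particular at least (|B|/8)·log₂(2^d/|B|). -/

import Mathlib

noncomputable section

/-- The dot product on `ℝ^n`. -/
def dot {n : ℕ} (c x : Fin n → ℝ) : ℝ := ∑ i, c i * x i

/-- The vertex set of the 0/1-cube in `ℝ^n`. -/
def cube01 (n : ℕ) : Set (Fin n → ℝ) := {x | ∀ i, x i = 0 ∨ x i = 1}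

/-- `F` is the vertex set of a face of the polytope `conv P`, where `P` is the set of
vertices of the polytope: there is a supporting linear functional attaining its maximum
on `P` exactly on `F`. -/
def IsFaceOf {n : ℕ} (P F : Set (Fin n → ℝ)) : Prop :=
  ∃ (c : Fin n → ℝ) (γ : ℝ), (∀ x ∈ P, dot c x ≤ γ) ∧ F = {x | x ∈ P ∧ dot c x = γ}

/-- `{x, y}` is an edge (1-dimensional face) of the polytope `conv P`. -/
def IsPolytopeEdge {n : ℕ} (P : Set (Fin n → ℝ)) (x y : Fin n → ℝ) : Prop :=
  x ∈ P ∧ y ∈ P ∧ x ≠ y ∧ IsFaceOf P {x, y}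

/-- The number of edges of the graph of the polytope `conv P` with one endpoint in `A`
and the other endpoint in `B`. -/
def polyEdgeCount {n : ℕ} (P A B : Set (Fin n → ℝ)) : ℕ :=
  {p : (Fin n → ℝ) × (Fin n → ℝ) | p.1 ∈ A ∧ p.2 ∈ B ∧ IsPolytopeEdge P p.1 p.2}.ncard

/-- Adjacency in the hypercube graph `Q^d`: the two points differ in exactly one coordinate. -/
def cubeAdj {d : ℕ} (x y : Fin d → ℝ) : Prop := {i | x i ≠ y i}.ncard = 1

/-- The number of hypercube-neighbors of `x` belonging to `C`. -/
def cubeDeg {d : ℕ} (x : Fin d → ℝ) (C : Set (Fin d → ℝ)) : ℕ :=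
  {y | y ∈ C ∧ cubeAdj x y}.ncard

/-- The number of hypercube edges with one endpoint in `A` and the other in `B`. -/
def cubeEdgeCount {d : ℕ} (A B : Set (Fin d → ℝ)) : ℕ :=
  {p : (Fin d → ℝ) × (Fin d → ℝ) | p.1 ∈ A ∧ p.2 ∈ B ∧ cubeAdj p.1 p.2}.ncard

/-- `R ⊆ {0,1}^d` is `ε`-good: (R1) every vertex of `R` has more than `(1-ε)d`
hypercube-neighbors in `R`; (R2) every `C ⊆ {0,1}^d` with `|C| ≥ 2^d/20` satisfies
`|C ∩ R| ≥ 2^d/40`. -/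
def epsGood {d : ℕ} (ε : ℝ) (R : Set (Fin d → ℝ)) : Prop :=
  R ⊆ cube01 d ∧
  (∀ x ∈ R, (1 - ε) * d < (cubeDeg x R : ℝ)) ∧
  (∀ C ⊆ cube01 d, (2 : ℝ) ^ d / 20 ≤ (C.ncard : ℝ) → (2 : ℝ) ^ d / 40 ≤ ((C ∩ R).ncard : ℝ))

/-- Projection onto the first `d` coordinates. -/
def proj {n d : ℕ} (h : d ≤ n) (x : Fin n → ℝ) : Fin d → ℝ := fun i => x (Fin.castLE h i)

/-- The characteristic vector of a subset of `[n]`. -/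
def charVec {n : ℕ} (A : Finset (Fin n)) : Fin n → ℝ := fun i => if i ∈ A then 1 else 0

/-- A face of the cube `[0,1]^n`, given by fixing the coordinates in the support of `σ`;
its dimension is the number of indices where `σ` is `none`. -/
def cubeFace {n : ℕ} (σ : Fin n → Option Bool) : Set (Fin n → ℝ) :=
  {z | z ∈ cube01 n ∧ ∀ i b, σ i = some b → z i = if b then 1 else 0}

/-!
Every hypercube edge between two points of `R ⊆ {0,1}^d` is an edge of `conv R`, so the
polytope edges from `B` to `R \ B` include the cube edges from `B` to `L ∩ R ⊆ R \ B`. By (R2)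
there are at least `2^d/40` points in `L ∩ R`, each with more than `(1 - 2ε)d ≥ d/2` cube
neighbours in `B`, which gives `d·2^d/80` edges. The logarithmic bound follows from
`x·log₂(N/x) ≤ N` for `0 ≤ x ≤ N` and `d ≥ 10`.
-/

open Finset

lemma cube01_finite (d : ℕ) : (cube01 d).Finite :=
  (Set.Finite.pi (fun _ => (Set.finite_singleton (1 : ℝ)).insert 0)).subset
    fun _ hx i _ => hx i

lemma ncard_le_two_pow_of_subset_cube01 {d : ℕ} {A : Set (Fin d → ℝ)} (hA : A ⊆ cube01 d) :
    A.ncard ≤ 2 ^ d := by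
  have hinj : Set.InjOn (fun x i => decide (x i = 1)) A := by
    intro x hx y hy hxy
    funext i
    have := congrFun hxy i
    rcases hA hx i with h | h <;> rcases hA hy i with h' | h' <;> simp_all
  simpa [Set.ncard_univ] using
    Set.ncard_le_ncard_of_injOn _ (fun _ _ => Set.mem_univ _) hinj Set.finite_univ

lemma cubeAdj_comm {d : ℕ} {x y : Fin d → ℝ} : cubeAdj x y ↔ cubeAdj y x := by
  simp only [cubeAdj, ne_comm]

lemma cubeAdj_iff {d : ℕ} {x y : Fin d → ℝ} :
    cubeAdj x y ↔ ∃ i, x i ≠ y i ∧ ∀ j, j ≠ i → x j = y j := by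
  simp only [cubeAdj, Set.ncard_eq_one, Set.ext_iff, Set.mem_ofPred_eq, Set.mem_singleton_iff]
  refine exists_congr fun i => ⟨fun h => ⟨(h i).2 rfl, fun j hj => ?_⟩, fun h j => ?_⟩
  · by_contra hne; exact hj ((h j).1 hne)
  · exact ⟨fun hne => by by_contra hj; exact hne (h.2 j hj), fun hj => hj ▸ h.1⟩

lemma mul_sub_nonneg_of_bit {a b : ℝ} (ha : a = 0 ∨ a = 1) (hb : b = 0 ∨ b = 1) :
    0 ≤ (2 * a - 1) * (a - b) := by
  rcases ha with rfl | rfl <;> rcases hb with rfl | rfl <;> norm_num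

lemma eq_of_mul_sub_eq_zero_of_bit {a b : ℝ} (ha : a = 0 ∨ a = 1)
    (h : (2 * a - 1) * (a - b) = 0) : b = a := by
  rcases ha with rfl | rfl <;> linarith

lemma eq_or_eq_of_bit {a b c : ℝ} (ha : a = 0 ∨ a = 1) (hb : b = 0 ∨ b = 1)
    (hc : c = 0 ∨ c = 1) (hab : a ≠ b) : c = a ∨ c = b := by
  rcases ha with rfl | rfl <;> rcases hb with rfl | rfl <;> rcases hc with rfl | rfl <;>
    simp_all

/-- A hypercube edge `{x, y}` is cut out of `{0,1}^d` by the functional rewarding agreement with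
`x` in every coordinate except the one where `x` and `y` differ. -/
lemma isPolytopeEdge_of_cubeAdj {d : ℕ} {R : Set (Fin d → ℝ)} (hR : R ⊆ cube01 d)
    {x y : Fin d → ℝ} (hx : x ∈ R) (hy : y ∈ R) (hxy : cubeAdj x y) :
    IsPolytopeEdge R x y := by
  obtain ⟨i, hxyi, hagree⟩ := cubeAdj_iff.1 hxy
  set c : Fin d → ℝ := fun j => if j = i then 0 else 2 * x j - 1
  have hgap : ∀ z, dot c x - dot c z = ∑ j, c j * (x j - z j) := fun z => by
    simp only [dot, mul_sub, Finset.sum_sub_distrib]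
  have hterm : ∀ z ∈ cube01 d, ∀ j, 0 ≤ c j * (x j - z j) := fun z hz j => by
    by_cases hj : j = i
    · simp [c, hj]
    · simpa [c, hj] using mul_sub_nonneg_of_bit (hR hx j) (hz j)
  refine ⟨hx, hy, fun h => hxyi (h ▸ rfl), c, dot c x, fun z hz => ?_, ?_⟩
  · linarith [hgap z, Finset.sum_nonneg fun j (_ : j ∈ univ) => hterm z (hR hz) j]
  ext z
  simp only [Set.mem_insert_iff, Set.mem_singleton_iff, Set.mem_ofPred_eq]
  constructor
  · rintro (rfl | rfl)
    · exact ⟨hx, rfl⟩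
    · refine ⟨hy, ?_⟩
      have : ∑ j, c j * (x j - z j) = 0 := Finset.sum_eq_zero fun j _ => by
        by_cases hj : j = i
        · simp [c, hj]
        · simp [hagree j hj]
      linarith [hgap z]
  · rintro ⟨hzR, hz⟩
    have hzero := (Finset.sum_eq_zero_iff_of_nonneg fun j _ => hterm z (hR hzR) j).1
      (by linarith [hgap z])
    have hoff : ∀ j, j ≠ i → z j = x j := fun j hj =>
      eq_of_mul_sub_eq_zero_of_bit (hR hx j) (by simpa [c, hj] using hzero j (mem_univ j))
    rcases eq_or_eq_of_bit (hR hx i) (hR hy i) (hR hzR i) hxyi with hzi | hzi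
    · exact Or.inl <| funext fun j => if hj : j = i then hj ▸ hzi else hoff j hj
    · exact Or.inr <| funext fun j =>
        if hj : j = i then hj ▸ hzi else (hoff j hj).trans (hagree j hj)

lemma cubeEdgeCount_eq_sum_cubeDeg {d : ℕ} {A C : Set (Fin d → ℝ)} (hA : A.Finite)
    (hC : C.Finite) : cubeEdgeCount A C = ∑ y ∈ hC.toFinset, cubeDeg y A := by
  classical
  have hpairs : {p : (Fin d → ℝ) × (Fin d → ℝ) | p.1 ∈ A ∧ p.2 ∈ C ∧ cubeAdj p.1 p.2} =
      ↑((hA.toFinset ×ˢ hC.toFinset).filter fun p => cubeAdj p.1 p.2) := by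
    ext p; simp [and_assoc]
  have hdeg : ∀ y, {x | x ∈ A ∧ cubeAdj y x} = ↑(hA.toFinset.filter fun x => cubeAdj x y) :=
    fun y => by ext x; simp [cubeAdj_comm]
  simp only [cubeEdgeCount, cubeDeg, hpairs, hdeg, Set.ncard_coe_finset, card_filter,
    sum_product_right]

lemma card_mul_le_cubeEdgeCount {d : ℕ} {A C : Set (Fin d → ℝ)} (hA : A.Finite)
    (hC : C.Finite) {k : ℝ} (hk : ∀ y ∈ C, k ≤ cubeDeg y A) :
    C.ncard * k ≤ cubeEdgeCount A C := by
  rw [cubeEdgeCount_eq_sum_cubeDeg hA hC, Set.ncard_eq_toFinset_card C hC, Nat.cast_sum,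
    ← nsmul_eq_mul]
  exact card_nsmul_le_sum _ _ _ fun y hy => hk y (hC.mem_toFinset.1 hy)

lemma cubeEdgeCount_le_polyEdgeCount {d : ℕ} {R A C : Set (Fin d → ℝ)} (hR : R ⊆ cube01 d)
    (hA : A ⊆ R) (hC : C ⊆ R) : cubeEdgeCount A C ≤ polyEdgeCount R A C := by
  have hRfin := (cube01_finite d).subset hR
  refine Set.ncard_le_ncard (fun p ⟨hp1, hp2, hadj⟩ => ⟨hp1, hp2, ?_⟩)
    ((hRfin.prod hRfin).subset fun p hp => ⟨hA hp.1, hC hp.2.1⟩)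
  exact isPolytopeEdge_of_cubeAdj hR (hA hp1) (hC hp2) hadj

lemma polyEdgeCount_mono_right {n : ℕ} {P A C C' : Set (Fin n → ℝ)} (hP : P.Finite)
    (hC : C ⊆ C') : polyEdgeCount P A C ≤ polyEdgeCount P A C' :=
  Set.ncard_le_ncard (fun _ ⟨hp1, hp2, he⟩ => ⟨hp1, hC hp2, he⟩)
    ((hP.prod hP).subset fun _ hp => ⟨hp.2.2.1, hp.2.2.2.1⟩)

lemma Real.logb_two_le_self {t : ℝ} (ht : 1 ≤ t) : Real.logb 2 t ≤ t := by
  have hpow : t ≤ (2 : ℝ) ^ t := by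
    have := one_add_mul_self_le_rpow_one_add (s := 1) (by norm_num) ht
    norm_num at this
    linarith
  calc Real.logb 2 t ≤ Real.logb 2 ((2 : ℝ) ^ t) :=
        Real.logb_le_logb_of_le one_lt_two (by linarith) hpow
    _ = t := Real.logb_rpow two_pos one_lt_two.ne'

lemma mul_logb_two_div_le {x N : ℝ} (hx : 0 ≤ x) (hxN : x ≤ N) :
    x * Real.logb 2 (N / x) ≤ N := by
  rcases hx.eq_or_lt with rfl | hx
  · simpa using hxN
  calc x * Real.logb 2 (N / x) ≤ x * (N / x) :=
        mul_le_mul_of_nonneg_left (Real.logb_two_le_self ((one_le_div hx).2 hxN)) hx.le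
    _ = N := mul_div_cancel₀ N hx.ne'

lemma card_div_eight_mul_logb_le {d : ℕ} (hd : 10 ≤ d) {A : Set (Fin d → ℝ)}
    (hA : A ⊆ cube01 d) :
    (A.ncard : ℝ) / 8 * Real.logb 2 (2 ^ d / A.ncard) ≤ d * 2 ^ d / 80 := by
  have hAcard : (A.ncard : ℝ) ≤ 2 ^ d := by exact_mod_cast ncard_le_two_pow_of_subset_cube01 hA
  have hd' : (10 : ℝ) ≤ d := by exact_mod_cast hd
  calc (A.ncard : ℝ) / 8 * Real.logb 2 (2 ^ d / A.ncard)
      = (A.ncard * Real.logb 2 (2 ^ d / A.ncard)) / 8 := by ring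
    _ ≤ 2 ^ d / 8 := by gcongr; exact mul_logb_two_div_le (Nat.cast_nonneg _) hAcard
    _ ≤ d * 2 ^ d / 80 := by nlinarith [pow_pos (two_pos : (0 : ℝ) < 2) d]

theorem expansion_large_L_general {d : ℕ} (ε : ℝ) (hε : ε < 1/4) (hd : 10 ≤ d)
    (R : Set (Fin d → ℝ)) (hR : epsGood ε R) (B : Set (Fin d → ℝ)) (hB : B ⊆ R)
    (hL : (2 : ℝ) ^ d / 20 ≤
      (({x | x ∈ cube01 d ∧ x ∉ B ∧ (1 - 2 * ε) * d < (cubeDeg x B : ℝ)}).ncard : ℝ)) :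
    (d : ℝ) * 2 ^ d / 80 ≤ (polyEdgeCount R B (R \ B) : ℝ) ∧
    (B.ncard : ℝ) / 8 * Real.logb 2 ((2 : ℝ) ^ d / (B.ncard : ℝ))
      ≤ (polyEdgeCount R B (R \ B) : ℝ) := by
  obtain ⟨hRcube, -, hR2⟩ := hR
  set L := {x | x ∈ cube01 d ∧ x ∉ B ∧ (1 - 2 * ε) * d < (cubeDeg x B : ℝ)}
  have hRfin := (cube01_finite d).subset hRcube
  have hLR : (2 : ℝ) ^ d / 40 ≤ (L ∩ R).ncard := hR2 L (fun _ hx => hx.1) hL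
  have hdeg : ∀ y ∈ L ∩ R, (d : ℝ) / 2 ≤ cubeDeg y B := fun y hy => by
    nlinarith [hy.1.2.2, (Nat.cast_nonneg d : (0 : ℝ) ≤ d)]
  have hcube : ((L ∩ R).ncard : ℝ) * (d / 2) ≤ cubeEdgeCount B (L ∩ R) :=
    card_mul_le_cubeEdgeCount (hRfin.subset hB) (hRfin.subset Set.inter_subset_right) hdeg
  have hpoly : cubeEdgeCount B (L ∩ R) ≤ polyEdgeCount R B (R \ B) :=
    (cubeEdgeCount_le_polyEdgeCount hRcube hB Set.inter_subset_right).trans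
      (polyEdgeCount_mono_right hRfin fun y hy => ⟨hy.2, hy.1.2.1⟩)
  have hmain : (d : ℝ) * 2 ^ d / 80 ≤ polyEdgeCount R B (R \ B) := by
    calc (d : ℝ) * 2 ^ d / 80 = 2 ^ d / 40 * (d / 2) := by ring
      _ ≤ (L ∩ R).ncard * (d / 2) := by gcongr
      _ ≤ polyEdgeCount R B (R \ B) := hcube.trans (by exact_mod_cast hpoly)
  exact ⟨hmain, (card_div_eight_mul_logb_le hd (hB.trans hRcube)).trans hmain⟩

/-- Case of many large-degree vertices: if `R` is `ε`-good, `B ⊆ R` and the set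
`L = {x ∉ B : deg(x,B) > (1-2ε)d}` has size at least `2^d/20`, then the number of edges
of the graph of `conv R` between `B` and `R \ B` is at least `d·2^d/80`, and in
particular at least `(|B|/8)·log₂(2^d/|B|)`. -/
theorem expansion_large_L {d : ℕ} (ε : ℝ) (hε0 : 0 < ε) (hε : ε < 1/4) (hd : 10 ≤ d)
    (R : Set (Fin d → ℝ)) (hR : epsGood ε R) (B : Set (Fin d → ℝ)) (hB : B ⊆ R)
    (hL : (2 : ℝ) ^ d / 20 ≤
      (({x | x ∈ cube01 d ∧ x ∉ B ∧ (1 - 2 * ε) * d < (cubeDeg x B : ℝ)}).ncard : ℝ)) :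
    (d : ℝ) * 2 ^ d / 80 ≤ (polyEdgeCount R B (R \ B) : ℝ) ∧
    (B.ncard : ℝ) / 8 * Real.logb 2 ((2 : ℝ) ^ d / (B.ncard : ℝ))
      ≤ (polyEdgeCount R B (R \ B) : ℝ) :=
  expansion_large_L_general ε hε hd R hR B hB hL
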